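/- For every x in the Clifford group Γ(Φ) of a nondegenerate quadratic form Φ, the norm N(x) = x·x̄ lies in ℝ*·1, where x̄ = t(α(x)) is the conjugate of x. -/

import Mathlib

open CliffordAlgebra

/-!
For `x` in the Clifford group, applying `reverse` to `α(x) v x⁻¹ ∈ V` shows that `y = x̄ x`
satisfies `v y = α(y) v` for every vector `v`. The twisted commutator `v y - α(y) v` is the
contraction of `y` by the functional `polar Q v`, and by nondegeneracy these functionals exhaust
the dual space, so every contraction of `y` vanishes. Writing `y` in an orthogonal basis
`e₁, …, eₙ` as `a + e₁ b` with `a, b` generated by `e₂, …, eₙ`, contraction with the first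
coordinate gives `b = 0`; by induction `y` is a scalar `c`. Then `N(x) = x y x⁻¹ = c`, and
`c ≠ 0` because `x` is invertible.
-/

namespace CliffordAlgebra

section CommRing

variable {R M : Type*} [CommRing R] [AddCommGroup M] [Module R M] {Q : QuadraticForm R M}

theorem contractLeft_mul (d : Module.Dual R M) (x y : CliffordAlgebra Q) :
    contractLeft d (x * y) = contractLeft d x * y + involute x * contractLeft d y := by
  induction x using CliffordAlgebra.induction generalizing y with
  | algebraMap r => simp [contractLeft_algebraMap_mul, contractLeft_algebraMap]
  | ι v =>
    rw [contractLeft_ι_mul, contractLeft_ι, involute_ι, Algebra.smul_def]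
    noncomm_ring
  | mul a b ha hb =>
    rw [mul_assoc, ha, hb, ha, map_mul]
    noncomm_ring
  | add a b ha hb =>
    simp only [add_mul, map_add, ha, hb]
    abel

theorem ι_mul_sub_involute_mul_ι (v : M) (y : CliffordAlgebra Q) :
    ι Q v * y - involute y * ι Q v = contractLeft (Q.polarBilin v) y := by
  induction y using CliffordAlgebra.induction with
  | algebraMap r => simp [Algebra.commutes, contractLeft_algebraMap]
  | ι w =>
    rw [contractLeft_ι, involute_ι, QuadraticMap.polarBilin_apply_apply,
      ← ι_mul_ι_add_swap]
    noncomm_ring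
  | mul a b ha hb =>
    rw [contractLeft_mul, ← ha, ← hb, map_mul]
    noncomm_ring
  | add a b ha hb =>
    rw [map_add, add_mul, mul_add, map_add, ← ha, ← hb]
    abel

section Adjoin

variable {s : Set M}

theorem involute_mem_adjoin {a : CliffordAlgebra Q} (ha : a ∈ Algebra.adjoin R (ι Q '' s)) :
    involute a ∈ Algebra.adjoin R (ι Q '' s) := by
  induction ha using Algebra.adjoin_induction with
  | mem x hx =>
    obtain ⟨v, hv, rfl⟩ := hx
    rw [involute_ι]
    exact neg_mem (Algebra.subset_adjoin ⟨v, hv, rfl⟩)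
  | algebraMap r => rw [AlgHom.commutes]; exact Subalgebra.algebraMap_mem _ r
  | add x y _ _ hx hy => exact (map_add involute x y).symm ▸ add_mem hx hy
  | mul x y _ _ hx hy => exact (map_mul involute x y).symm ▸ mul_mem hx hy

theorem contractLeft_eq_zero_of_mem_adjoin {d : Module.Dual R M} (hd : ∀ v ∈ s, d v = 0)
    {a : CliffordAlgebra Q} (ha : a ∈ Algebra.adjoin R (ι Q '' s)) :
    contractLeft d a = 0 := by
  induction ha using Algebra.adjoin_induction with
  | mem x hx =>
    obtain ⟨v, hv, rfl⟩ := hx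
    rw [contractLeft_ι, hd v hv, map_zero]
  | algebraMap r => exact contractLeft_algebraMap (Q := Q) d r
  | add x y _ _ hx hy => rw [map_add, hx, hy, add_zero]
  | mul x y _ _ hx hy => rw [contractLeft_mul, hx, hy, zero_mul, mul_zero, add_zero]

theorem mul_ι_eq_ι_mul_involute_of_mem_adjoin {u : M} (hu : ∀ v ∈ s, QuadraticMap.polar Q u v = 0)
    {a : CliffordAlgebra Q} (ha : a ∈ Algebra.adjoin R (ι Q '' s)) :
    a * ι Q u = ι Q u * involute a := by
  have h := ι_mul_sub_involute_mul_ι u (involute a)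
  rw [involute_involute, contractLeft_eq_zero_of_mem_adjoin (d := Q.polarBilin u) hu
    (involute_mem_adjoin ha), sub_eq_zero] at h
  exact h.symm

theorem exists_eq_add_ι_mul_of_mem_adjoin_insert {u : M}
    (hu : ∀ v ∈ s, QuadraticMap.polar Q u v = 0) {z : CliffordAlgebra Q}
    (hz : z ∈ Algebra.adjoin R (ι Q '' insert u s)) :
    ∃ a ∈ Algebra.adjoin R (ι Q '' s), ∃ b ∈ Algebra.adjoin R (ι Q '' s), z = a + ι Q u * b := by
  induction hz using Algebra.adjoin_induction with
  | mem x hx =>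
    obtain ⟨v, hv | hv, rfl⟩ := hx
    · exact ⟨0, zero_mem _, 1, one_mem _, by rw [hv, mul_one, zero_add]⟩
    · exact ⟨ι Q v, Algebra.subset_adjoin ⟨v, hv, rfl⟩, 0, zero_mem _, by rw [mul_zero, add_zero]⟩
  | algebraMap r =>
    exact ⟨algebraMap R _ r, algebraMap_mem _ r, 0, zero_mem _, by rw [mul_zero, add_zero]⟩
  | add x y _ _ hx hy =>
    obtain ⟨a, ha, b, hb, rfl⟩ := hx
    obtain ⟨a', ha', b', hb', rfl⟩ := hy
    exact ⟨a + a', add_mem ha ha', b + b', add_mem hb hb', by noncomm_ring⟩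
  | mul x y _ _ hx hy =>
    obtain ⟨a, ha, b, hb, rfl⟩ := hx
    obtain ⟨a', ha', b', hb', rfl⟩ := hy
    refine ⟨a * a' + Q u • (involute b * b'),
      add_mem (mul_mem ha ha') (Subalgebra.smul_mem _ (mul_mem (involute_mem_adjoin hb) hb') _),
      involute a * b' + b * a', add_mem (mul_mem (involute_mem_adjoin ha) hb') (mul_mem hb ha'), ?_⟩
    calc (a + ι Q u * b) * (a' + ι Q u * b')
        = a * a' + a * ι Q u * b' + ι Q u * (b * a') + ι Q u * (b * ι Q u) * b' := by
          noncomm_ring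
      _ = a * a' + ι Q u * involute a * b' + ι Q u * (b * a')
            + ι Q u * ι Q u * (involute b * b') := by
          rw [mul_ι_eq_ι_mul_involute_of_mem_adjoin hu ha,
            mul_ι_eq_ι_mul_involute_of_mem_adjoin hu hb]
          noncomm_ring
      _ = _ := by
          rw [ι_sq_scalar, Algebra.smul_def]
          noncomm_ring

end Adjoin

theorem exists_eq_algebraMap_of_mem_adjoin_of_contractLeft_eq_zero {I : Type*}
    (e : Module.Basis I R M) (he : Q.polarBilin.IsOrthoᵢ e) (t : Finset I) {z : CliffordAlgebra Q}
    (hz : z ∈ Algebra.adjoin R (ι Q '' (e '' t))) (hz₀ : ∀ d, contractLeft d z = 0) :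
    ∃ c : R, z = algebraMap R _ c := by
  classical
  induction t using Finset.induction_on generalizing z with
  | empty =>
    rw [Finset.coe_empty, Set.image_empty, Set.image_empty, Algebra.adjoin_empty,
      Algebra.mem_bot] at hz
    obtain ⟨c, hc⟩ := hz
    exact ⟨c, hc.symm⟩
  | insert i t hi ih =>
    have hne : ∀ j ∈ t, i ≠ j := fun j hj hij => hi (hij ▸ hj)
    rw [Finset.coe_insert, Set.image_insert_eq] at hz
    obtain ⟨a, ha, b, hb, rfl⟩ := exists_eq_add_ι_mul_of_mem_adjoin_insert
      (by rintro _ ⟨j, hj, rfl⟩; exact he (hne j hj)) hz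
    have hcoord : ∀ v ∈ e '' t, e.coord i v = 0 := by
      rintro _ ⟨j, hj, rfl⟩
      simp [(hne j hj).symm]
    have hb₀ : b = 0 := by
      have h := hz₀ (e.coord i)
      rwa [map_add, contractLeft_eq_zero_of_mem_adjoin hcoord ha, zero_add, contractLeft_ι_mul,
        contractLeft_eq_zero_of_mem_adjoin hcoord hb, mul_zero, sub_zero, Module.Basis.coord_apply,
        Module.Basis.repr_self, Finsupp.single_eq_same, one_smul] at h
    rw [hb₀, mul_zero, add_zero] at hz₀ ⊢
    exact ih ha hz₀

theorem adjoin_ι_image_range_basis_eq_top {I : Type*} (e : Module.Basis I R M) :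
    Algebra.adjoin R (ι Q '' Set.range e) = ⊤ := by
  refine eq_top_iff.2 (adjoin_range_ι (Q := Q) ▸ Algebra.adjoin_le ?_)
  rintro _ ⟨v, rfl⟩
  have hv := Submodule.mem_map_of_mem (f := ι Q) (e.mem_span v)
  rw [Submodule.map_span] at hv
  exact Algebra.span_le_adjoin R _ hv

theorem ι_mul_reverse_involute_mul_self {a a' : CliffordAlgebra Q} (ha : a' * a = 1)
    (hv : ∀ v : M, involute a * ι Q v * a' ∈ Set.range (ι Q)) (v : M) :
    ι Q v * (reverse (involute a) * a) = involute (reverse (involute a) * a) * ι Q v := by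
  obtain ⟨u, hu⟩ := hv v
  -- `reverse` fixes the vector `ι Q u`
  have hrev : reverse a' * ι Q v * reverse (involute a) = involute a * ι Q v * a' := by
    rw [← hu, ← reverse_ι u, hu, reverse.map_mul, reverse.map_mul, reverse_ι, mul_assoc]
  have hra : reverse a * reverse a' = 1 := by rw [← reverse.map_mul, ha, reverse.map_one]
  calc ι Q v * (reverse (involute a) * a)
      = reverse a * (reverse a' * ι Q v * reverse (involute a)) * a := by
        simp only [← mul_assoc, hra, one_mul]
    _ = reverse a * involute a * ι Q v := by
        rw [hrev]
        simp only [mul_assoc, ha, mul_one]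
    _ = involute (reverse (involute a) * a) * ι Q v := by
        rw [map_mul, reverse_involute, involute_involute]

end CommRing

section Field

variable {K V : Type*} [Field K] [Invertible (2 : K)] [AddCommGroup V] [Module K V]
  [FiniteDimensional K V] {Q : QuadraticForm K V}

theorem exists_eq_algebraMap_of_forall_contractLeft_eq_zero {y : CliffordAlgebra Q}
    (hy : ∀ d, contractLeft d y = 0) : ∃ c : K, y = algebraMap K _ c := by
  obtain ⟨e, he⟩ := LinearMap.BilinForm.exists_orthogonal_basis (B := Q.polarBilin)
    ⟨QuadraticMap.polar_comm Q⟩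
  refine exists_eq_algebraMap_of_mem_adjoin_of_contractLeft_eq_zero e he Finset.univ ?_ hy
  rw [Finset.coe_univ, Set.image_univ, adjoin_ι_image_range_basis_eq_top]
  exact Algebra.mem_top

theorem exists_eq_algebraMap_of_forall_ι_mul_eq_involute_mul_ι
    (hQ : Q.polarBilin.SeparatingLeft) {y : CliffordAlgebra Q}
    (hy : ∀ v, ι Q v * y = involute y * ι Q v) : ∃ c : K, y = algebraMap K _ c := by
  refine exists_eq_algebraMap_of_forall_contractLeft_eq_zero fun d => ?_
  have hsurj : Function.Surjective Q.polarBilin :=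
    (LinearMap.injective_iff_surjective_of_finrank_eq_finrank Subspace.dual_finrank_eq.symm).1
      (LinearMap.ker_eq_bot.1 (LinearMap.separatingLeft_iff_ker_eq_bot.1 hQ))
  obtain ⟨v, rfl⟩ := hsurj d
  rw [← ι_mul_sub_involute_mul_ι, hy, sub_self]

end Field

end CliffordAlgebra

/-- For every `x` in the Clifford group `Γ(Φ)` of a nondegenerate quadratic form `Φ` on a
finite-dimensional real vector space, the norm `N(x) = x·x̄` (where `x̄ = t(α(x))` is the
conjugate, i.e. `reverse (involute x)`) lies in `ℝ*·1`. -/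
theorem clifford_group_norm_is_scalar {V : Type*} [AddCommGroup V] [Module ℝ V]
    [FiniteDimensional ℝ V] (Q : QuadraticForm ℝ V)
    (hnd : ∀ v : V, (∀ w : V, QuadraticMap.polar Q v w = 0) → v = 0)
    (x : (CliffordAlgebra Q)ˣ)
    (hx : ∀ v : V, involute (x : CliffordAlgebra Q) * ι Q v * ↑x⁻¹ ∈ Set.range (ι Q)) :
    ∃ c : ℝ, c ≠ 0 ∧
      (x : CliffordAlgebra Q) * reverse (involute (x : CliffordAlgebra Q)) =
        algebraMap ℝ (CliffordAlgebra Q) c := by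
  obtain ⟨c, hc⟩ := exists_eq_algebraMap_of_forall_ι_mul_eq_involute_mul_ι hnd
    (ι_mul_reverse_involute_mul_self x.inv_mul hx)
  have hN : (x : CliffordAlgebra Q) * reverse (involute (x : CliffordAlgebra Q)) =
      algebraMap ℝ _ c := by
    calc (x : CliffordAlgebra Q) * reverse (involute (x : CliffordAlgebra Q))
        = x * (reverse (involute (x : CliffordAlgebra Q)) * x) * ↑x⁻¹ := by
          simp only [mul_assoc, x.mul_inv, mul_one]
      _ = algebraMap ℝ _ c := by
          rw [hc, ← Algebra.commutes, mul_assoc, x.mul_inv, mul_one]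
  refine ⟨c, fun hc₀ => x.ne_zero ?_, hN⟩
  have hrev : reverse (involute (x : CliffordAlgebra Q)) = 0 := by
    simpa [hc₀, ← mul_assoc] using congrArg ((↑x⁻¹ : CliffordAlgebra Q) * ·) hN
  simpa using congrArg (involute ∘ reverse) hrev
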